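/- arXiv:1911.01728 — 4 statements merged into one kernel-verified Lean document; each statement's English description precedes it below -/
import Mathlib

section
/- Let X, Y be real Hilbert spaces, F : D(F) ⊂ X → Y Fréchet differentiable satisfying the tangential cone condition ‖F(x) - F(x̃) - F'(x)(x - x̃)‖ ≤ η‖F(x) - F(x̃)‖ for all x, x̃ in a ball B ⊂ D(F), with 0 < η < 1. Let y be such that F(z) = y is solvable in B and let z' ∈ B. Define w = F(z') - y, u = F'(z')* w, α = ⟨u, z'⟩ - ‖w‖², ξ = η‖w‖². Then every solution z ∈ B of F(z) = y satisfies |⟨u, z⟩ - α| ≤ ξ, i.e., the solution set is contained in the stripe H(u,α,ξ). -/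
open RealInnerProductSpace

theorem solutions_in_stripe_exact
    {X Y : Type*} [NormedAddCommGroup X] [InnerProductSpace ℝ X] [CompleteSpace X]
    [NormedAddCommGroup Y] [InnerProductSpace ℝ Y] [CompleteSpace Y]
    (B : Set X) (F : X → Y) (F' : X → X →L[ℝ] Y) (η : ℝ) (hη0 : 0 < η) (hη1 : η < 1)
    (htc : ∀ x ∈ B, ∀ xt ∈ B, ‖F x - F xt - F' x (x - xt)‖ ≤ η * ‖F x - F xt‖)
    (y : Y) (z' : X) (hz' : z' ∈ B)
    (w : Y) (hw : w = F z' - y)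
    (u : X) (hu : u = (F' z').adjoint w)
    (α : ℝ) (hα : α = ⟪u, z'⟫ - ‖w‖ ^ 2)
    (ξ : ℝ) (hξ : ξ = η * ‖w‖ ^ 2)
    (z : X) (hz : z ∈ B) (hsol : F z = y) :
    |⟪u, z⟫ - α| ≤ ξ := by
  have hw' : w = F z' - F z := by rw [hw, hsol]
  have hadj : ∀ v : X, ⟪u, v⟫ = ⟪w, F' z' v⟫ := by
    intro v
    rw [hu, ContinuousLinearMap.adjoint_inner_left]
  have key : ⟪u, z⟫ - α = ⟪w, F z' - F z - F' z' (z' - z)⟫ := by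
    rw [hα, hadj, hadj, show ‖w‖ ^ 2 = ⟪w, w⟫ from (real_inner_self_eq_norm_sq w).symm]
    simp only [map_sub, inner_sub_right, inner_neg_right, hw']
    ring
  rw [key]
  calc |⟪w, F z' - F z - F' z' (z' - z)⟫| ≤ ‖w‖ * ‖F z' - F z - F' z' (z' - z)‖ :=
        abs_real_inner_le_norm _ _
    _ ≤ ‖w‖ * (η * ‖F z' - F z‖) := by
        exact mul_le_mul_of_nonneg_left (htc z' hz' z hz) (norm_nonneg _)
    _ = ξ := by rw [hξ, ← hw']; ring
end

section
/- Under the tangential cone condition with constant 0 < η < 1 and noisy data y^δ with ‖y^δ - y‖ ≤ δ: for z' ∈ B define w = F(z') - y^δ, u = F'(z')* w, α = ⟨u, z'⟩ - ‖w‖², ξ = (δ + η(‖w‖ + δ))‖w‖. Then every solution z ∈ B of F(z) = y satisfies |⟨u, z⟩ - α| ≤ ξ. -/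
open RealInnerProductSpace

theorem solutions_in_stripe_noisy
    {X Y : Type*} [NormedAddCommGroup X] [InnerProductSpace ℝ X] [CompleteSpace X]
    [NormedAddCommGroup Y] [InnerProductSpace ℝ Y] [CompleteSpace Y]
    (B : Set X) (F : X → Y) (F' : X → X →L[ℝ] Y) (η : ℝ) (hη0 : 0 < η) (hη1 : η < 1)
    (htc : ∀ x ∈ B, ∀ xt ∈ B, ‖F x - F xt - F' x (x - xt)‖ ≤ η * ‖F x - F xt‖)
    (y yδ : Y) (δ : ℝ) (hδ : ‖yδ - y‖ ≤ δ)
    (z' : X) (hz' : z' ∈ B)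
    (w : Y) (hw : w = F z' - yδ)
    (u : X) (hu : u = (F' z').adjoint w)
    (α : ℝ) (hα : α = ⟪u, z'⟫ - ‖w‖ ^ 2)
    (ξ : ℝ) (hξ : ξ = (δ + η * (‖w‖ + δ)) * ‖w‖)
    (z : X) (hz : z ∈ B) (hsol : F z = y) :
    |⟪u, z⟫ - α| ≤ ξ := by
  have htcz := htc z' hz' z hz
  set v : Y := (F z - yδ) + (F z' - F z - F' z' (z' - z)) with hv
  have h1 : ⟪u, z⟫ - α = ⟪w, v⟫ := by
    simp only [hu, hα, hw, hv, ContinuousLinearMap.adjoint_inner_left,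
      inner_add_right, inner_sub_right, inner_sub_left, map_sub, real_inner_self_eq_norm_sq,
      norm_sub_sq_real, real_inner_comm yδ (F z')]
    ring
  have hFzδ : ‖F z - yδ‖ ≤ δ := by
    rw [hsol, norm_sub_rev]; exact hδ
  have hFF : ‖F z' - F z‖ ≤ ‖w‖ + δ := by
    calc ‖F z' - F z‖ = ‖(F z' - yδ) + (yδ - F z)‖ := by rw [sub_add_sub_cancel]
      _ ≤ ‖F z' - yδ‖ + ‖yδ - F z‖ := norm_add_le _ _
      _ ≤ ‖w‖ + δ := by rw [hw, hsol]; exact add_le_add le_rfl hδ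
  have hvbound : ‖v‖ ≤ δ + η * (‖w‖ + δ) := by
    calc ‖v‖ ≤ ‖F z - yδ‖ + ‖F z' - F z - F' z' (z' - z)‖ := norm_add_le _ _
      _ ≤ δ + η * ‖F z' - F z‖ := add_le_add hFzδ htcz
      _ ≤ δ + η * (‖w‖ + δ) := by
          exact add_le_add le_rfl (mul_le_mul_of_nonneg_left hFF hη0.le)
  calc |⟪u, z⟫ - α| = |⟪w, v⟫| := by rw [h1]
    _ ≤ ‖w‖ * ‖v‖ := abs_real_inner_le_norm _ _
    _ ≤ ‖w‖ * (δ + η * (‖w‖ + δ)) := mul_le_mul_of_nonneg_left hvbound (norm_nonneg _)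
    _ = ξ := by rw [hξ]; ring
end

section
/- In the exact-data setting of the TGSS method: let z ∈ B solve F(z) = y, let z_k ∈ B with r_k = F(z_k) - y ≠ 0, u = F'(z_k)* r_k ≠ 0. If x' = z_k - ((1-η)‖r_k‖²/‖u‖²)·u (the projection of z_k onto the hyperplane ⟨u,·⟩ = α+ξ with α, ξ as in the exact-data stripe definition), then ‖z - x'‖² ≤ ‖z - z_k‖² - (1-η)²‖r_k‖⁴/‖u‖². -/
open RealInnerProductSpace

/-! The tangential cone condition at `zₖ`, tested against the exact solution `z`, says that the
linearisation `F'(zₖ)(zₖ - z)` is within `η‖rₖ‖` of `rₖ`; hence `⟪u, zₖ - z⟫ = ⟪rₖ, F'(zₖ)(zₖ - z)⟫`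
is at least `(1 - η)‖rₖ‖²`. So `z` lies in the half-space `⟪u, ·⟫ ≤ ⟪u, zₖ⟫ - (1 - η)‖rₖ‖²`, and
`x'` is the projection of `zₖ` onto its boundary, which brings every point of the half-space closer
by the Pythagorean amount. -/

theorem one_sub_mul_norm_sq_le_inner_of_norm_sub_le {E : Type*} [NormedAddCommGroup E]
    [InnerProductSpace ℝ E] {r v : E} {η : ℝ} (h : ‖r - v‖ ≤ η * ‖r‖) :
    (1 - η) * ‖r‖ ^ 2 ≤ ⟪r, v⟫ := by
  have hsplit : ⟪r, v⟫ = ‖r‖ ^ 2 - ⟪r, r - v⟫ := by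
    rw [inner_sub_right, real_inner_self_eq_norm_sq]; ring
  have hbound : ⟪r, r - v⟫ ≤ η * ‖r‖ ^ 2 :=
    calc ⟪r, r - v⟫ ≤ ‖r‖ * ‖r - v‖ := real_inner_le_norm _ _
      _ ≤ ‖r‖ * (η * ‖r‖) := mul_le_mul_of_nonneg_left h (norm_nonneg _)
      _ = η * ‖r‖ ^ 2 := by ring
  linarith

theorem norm_sub_sub_smul_sq_le_of_le_inner {E : Type*} [NormedAddCommGroup E]
    [InnerProductSpace ℝ E] {x z u : E} {c : ℝ} (hc : 0 ≤ c) (h : c ≤ ⟪u, x - z⟫) :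
    ‖z - (x - (c / ‖u‖ ^ 2) • u)‖ ^ 2 ≤ ‖z - x‖ ^ 2 - c ^ 2 / ‖u‖ ^ 2 := by
  rcases eq_or_ne u 0 with rfl | hu
  · simp
  set t := c / ‖u‖ ^ 2
  have hu2 : 0 < ‖u‖ ^ 2 := by positivity
  have ht : 0 ≤ t := by positivity
  have htu : t * ‖u‖ ^ 2 = c := div_mul_cancel₀ _ hu2.ne'
  have hexpand : ‖z - (x - t • u)‖ ^ 2 = ‖z - x‖ ^ 2 - 2 * t * ⟪u, x - z⟫ + t ^ 2 * ‖u‖ ^ 2 := by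
    rw [show z - (x - t • u) = -(x - z) + t • u by abel, norm_add_sq_real, norm_neg,
      inner_neg_left, real_inner_smul_right, real_inner_comm, norm_smul, mul_pow,
      Real.norm_eq_abs, sq_abs, norm_sub_rev]
    ring
  have hc2 : c ^ 2 / ‖u‖ ^ 2 = t * c := by rw [← htu]; field_simp
  rw [hexpand, hc2]
  nlinarith [mul_le_mul_of_nonneg_left h ht]

theorem tgss_descent_exact_general
    {X Y : Type*} [NormedAddCommGroup X] [InnerProductSpace ℝ X] [CompleteSpace X]
    [NormedAddCommGroup Y] [InnerProductSpace ℝ Y] [CompleteSpace Y]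
    (B : Set X) (F : X → Y) (F' : X → X →L[ℝ] Y) (η : ℝ) (hη1 : η < 1)
    (htc : ∀ x ∈ B, ∀ xt ∈ B, ‖F x - F xt - F' x (x - xt)‖ ≤ η * ‖F x - F xt‖)
    (y : Y) (z : X) (hz : z ∈ B) (hsol : F z = y)
    (zk : X) (hzk : zk ∈ B)
    (rk : Y) (hrk : rk = F zk - y)
    (u : X) (hu : u = (F' zk).adjoint rk)
    (x' : X) (hx' : x' = zk - (((1 - η) * ‖rk‖ ^ 2) / ‖u‖ ^ 2) • u) :
    ‖z - x'‖ ^ 2 ≤ ‖z - zk‖ ^ 2 - (1 - η) ^ 2 * ‖rk‖ ^ 4 / ‖u‖ ^ 2 := by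
  have hcone : ‖rk - F' zk (zk - z)‖ ≤ η * ‖rk‖ := by
    simpa only [hrk, hsol] using htc zk hzk z hz
  have hstripe : (1 - η) * ‖rk‖ ^ 2 ≤ ⟪u, zk - z⟫ := by
    rw [hu, ContinuousLinearMap.adjoint_inner_left]
    exact one_sub_mul_norm_sq_le_inner_of_norm_sub_le hcone
  have hc : 0 ≤ (1 - η) * ‖rk‖ ^ 2 := mul_nonneg (by linarith) (sq_nonneg _)
  rw [hx']
  convert norm_sub_sub_smul_sq_le_of_le_inner hc hstripe using 3
  ring

theorem tgss_descent_exact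
    {X Y : Type*} [NormedAddCommGroup X] [InnerProductSpace ℝ X] [CompleteSpace X]
    [NormedAddCommGroup Y] [InnerProductSpace ℝ Y] [CompleteSpace Y]
    (B : Set X) (F : X → Y) (F' : X → X →L[ℝ] Y) (η : ℝ) (hη0 : 0 < η) (hη1 : η < 1)
    (htc : ∀ x ∈ B, ∀ xt ∈ B, ‖F x - F xt - F' x (x - xt)‖ ≤ η * ‖F x - F xt‖)
    (y : Y) (z : X) (hz : z ∈ B) (hsol : F z = y)
    (zk : X) (hzk : zk ∈ B)
    (rk : Y) (hrk : rk = F zk - y) (hrk0 : rk ≠ 0)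
    (u : X) (hu : u = (F' zk).adjoint rk) (hu0 : u ≠ 0)
    (x' : X) (hx' : x' = zk - (((1 - η) * ‖rk‖ ^ 2) / ‖u‖ ^ 2) • u) :
    ‖z - x'‖ ^ 2 ≤ ‖z - zk‖ ^ 2 - (1 - η) ^ 2 * ‖rk‖ ^ 4 / ‖u‖ ^ 2 :=
  tgss_descent_exact_general B F F' η hη1 htc y z hz hsol zk hzk rk hrk u hu x' hx'
end

section
/- In the noisy-data setting: let z solve F(z) = y with ‖y^δ - y‖ ≤ δ, let z_k ∈ B with r_k = F(z_k) - y^δ, u = F'(z_k)* r_k ≠ 0, and suppose ‖r_k‖ > δ(1+η)/(1-η). Then for x' = z_k - ((⟨u,z_k⟩ - (α+ξ))/‖u‖²)·u with α = ⟨u,z_k⟩ - ‖r_k‖² and ξ = (δ + η(‖r_k‖+δ))‖r_k‖, we have ‖z - x'‖² ≤ ‖z - z_k‖² - (‖r_k‖(‖r_k‖ - δ - η(‖r_k‖+δ))/‖u‖)². -/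
open RealInnerProductSpace

theorem tgss_descent_noisy
    {X Y : Type*} [NormedAddCommGroup X] [InnerProductSpace ℝ X] [CompleteSpace X]
    [NormedAddCommGroup Y] [InnerProductSpace ℝ Y] [CompleteSpace Y]
    (B : Set X) (F : X → Y) (F' : X → X →L[ℝ] Y) (η : ℝ) (hη0 : 0 < η) (hη1 : η < 1)
    (htc : ∀ x ∈ B, ∀ xt ∈ B, ‖F x - F xt - F' x (x - xt)‖ ≤ η * ‖F x - F xt‖)
    (y yδ : Y) (δ : ℝ) (hδ : ‖yδ - y‖ ≤ δ)
    (z : X) (hz : z ∈ B) (hsol : F z = y)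
    (zk : X) (hzk : zk ∈ B)
    (rk : Y) (hrk : rk = F zk - yδ)
    (hres : ‖rk‖ > δ * (1 + η) / (1 - η))
    (u : X) (hu : u = (F' zk).adjoint rk) (hu0 : u ≠ 0)
    (α : ℝ) (hα : α = ⟪u, zk⟫ - ‖rk‖ ^ 2)
    (ξ : ℝ) (hξ : ξ = (δ + η * (‖rk‖ + δ)) * ‖rk‖)
    (x' : X) (hx' : x' = zk - ((⟪u, zk⟫ - (α + ξ)) / ‖u‖ ^ 2) • u) :
    ‖z - x'‖ ^ 2 ≤ ‖z - zk‖ ^ 2 -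
      (‖rk‖ * (‖rk‖ - δ - η * (‖rk‖ + δ)) / ‖u‖) ^ 2 := by
  have hun : (0:ℝ) < ‖u‖ := norm_pos_iff.mpr hu0
  have hune : ‖u‖ ≠ 0 := ne_of_gt hun
  have hδ0 : (0:ℝ) ≤ δ := le_trans (norm_nonneg _) hδ
  have hrkpos : (0:ℝ) < ‖rk‖ :=
    lt_of_le_of_lt (div_nonneg (by nlinarith) (by linarith)) hres
  set t : ℝ := ‖rk‖ * (‖rk‖ - δ - η * (‖rk‖ + δ)) with htdef
  have hbracket : 0 < ‖rk‖ - δ - η * (‖rk‖ + δ) := by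
    have h1 : δ * (1 + η) < ‖rk‖ * (1 - η) := by
      have := (div_lt_iff₀ (by linarith : (0:ℝ) < 1 - η)).mp hres
      linarith
    nlinarith
  have ht : 0 < t := mul_pos hrkpos hbracket
  have hscal : ⟪u, zk⟫ - (α + ξ) = t := by rw [hα, hξ, htdef]; ring
  have hx2 : x' = zk - (t / ‖u‖ ^ 2) • u := by rw [hx', hscal]
  -- key inner product estimate
  have hFd : F zk - F z = rk + (yδ - y) := by rw [hrk, hsol]; abel
  have he := htc zk hzk z hz
  have hFn : ‖F zk - F z‖ ≤ ‖rk‖ + δ := by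
    rw [hFd]; exact le_trans (norm_add_le _ _) (by linarith)
  have key : ⟪u, z - zk⟫ ≤ -t := by
    have h1 : ⟪u, z - zk⟫ = ⟪rk, (F' zk) (z - zk)⟫ := by
      rw [hu, ContinuousLinearMap.adjoint_inner_left]
    have h2 : (F' zk) (z - zk)
        = (F zk - F z - (F' zk) (zk - z)) - (F zk - F z) := by
      simp only [map_sub]; abel
    have h3 : ⟪u, z - zk⟫
        = ⟪rk, F zk - F z - (F' zk) (zk - z)⟫ - ⟪rk, F zk - F z⟫ := by
      rw [h1, h2, inner_sub_right]
    have h4 : ⟪rk, F zk - F z - (F' zk) (zk - z)⟫ ≤ ‖rk‖ * (η * (‖rk‖ + δ)) := by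
      refine le_trans (real_inner_le_norm _ _) ?_
      have h4a : ‖F zk - F z - (F' zk) (zk - z)‖ ≤ η * (‖rk‖ + δ) :=
        le_trans he (mul_le_mul_of_nonneg_left hFn hη0.le)
      exact mul_le_mul_of_nonneg_left h4a (norm_nonneg rk)
    have h5 : ‖rk‖ ^ 2 - ‖rk‖ * δ ≤ ⟪rk, F zk - F z⟫ := by
      rw [hFd, inner_add_right, real_inner_self_eq_norm_sq]
      have habs : |⟪rk, yδ - y⟫| ≤ ‖rk‖ * δ :=
        le_trans (abs_real_inner_le_norm _ _)
          (mul_le_mul_of_nonneg_left hδ (norm_nonneg rk))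
      have := neg_abs_le ⟪rk, yδ - y⟫
      linarith
    have hring : ‖rk‖ * (η * (‖rk‖ + δ)) - (‖rk‖ ^ 2 - ‖rk‖ * δ)
        = -(‖rk‖ * (‖rk‖ - δ - η * (‖rk‖ + δ))) := by ring
    rw [h3, htdef]; linarith
  -- expand the squared norm
  have hzx : z - x' = (z - zk) + (t / ‖u‖ ^ 2) • u := by rw [hx2]; abel
  have hexp : ‖z - x'‖ ^ 2 = ‖z - zk‖ ^ 2
      + 2 * ((t / ‖u‖ ^ 2) * ⟪u, z - zk⟫) + (t / ‖u‖ ^ 2) ^ 2 * ‖u‖ ^ 2 := by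
    have hns : ‖(t / ‖u‖ ^ 2) • u‖ ^ 2 = (t / ‖u‖ ^ 2) ^ 2 * ‖u‖ ^ 2 := by
      rw [norm_smul, mul_pow, Real.norm_eq_abs, sq_abs]
    rw [hzx, norm_add_sq_real, real_inner_smul_right, real_inner_comm, hns]
  have hcpos : 0 < t / ‖u‖ ^ 2 := by positivity
  have hmul : (t / ‖u‖ ^ 2) * ⟪u, z - zk⟫ ≤ (t / ‖u‖ ^ 2) * (-t) :=
    mul_le_mul_of_nonneg_left key (le_of_lt hcpos)
  have e1 : (t / ‖u‖ ^ 2) ^ 2 * ‖u‖ ^ 2 = (t / ‖u‖) ^ 2 := by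
    field_simp
  have e2 : (t / ‖u‖ ^ 2) * t = (t / ‖u‖) ^ 2 := by
    field_simp
  have e3 : (t / ‖u‖) ^ 2 = (‖rk‖ * (‖rk‖ - δ - η * (‖rk‖ + δ)) / ‖u‖) ^ 2 := by
    rw [htdef]
  have hmul2 : (t / ‖u‖ ^ 2) * ⟪u, z - zk⟫ ≤ -((t / ‖u‖) ^ 2) := by
    rw [← e2]; linarith [hmul]
  rw [hexp, ← e3]
  linarith [hmul2, e1]
end
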